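/- arXiv:1302.3074 — 5 statements merged into one kernel-verified Lean document; each statement's English description precedes it below -/
import Mathlib

section
/- Let h : ℝⁿ → ℝ be coordinatewise separable, h(x) = Σ_{j=1}^n h_j(x_j), with each h_j : ℝ → ℝ convex. Let x, d ∈ ℝⁿ and suppose d = d¹ + … + dˢ where each dᵗ is conformal to d (i.e. supp(dᵗ) ⊆ supp(d) and dᵗ_j d_j ≥ 0 for all j). Then h(x + d) − h(x) ≥ Σ_{t=1}^s (h(x + dᵗ) − h(x)). -/
/-!
A convex function of one real variable has increments that grow with the step: for
`0 ≤ t ≤ 1`, `f (a + t v) - f a ≤ t (f (a + v) - f a)`. A step `D` split into pieces of the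
same sign as `D` is a split `D = ∑ (Dᵢ / D) D` with nonnegative weights summing to one, so the
increments of the pieces add up to at most the increment of the whole step. For a separable
`h` this holds coordinate by coordinate, and summing over coordinates gives the theorem.
-/

open Finset

section Increments

variable {E ι : Type*} [AddCommGroup E] [Module ℝ E] {s : Set E} {f : E → ℝ} {a v : E}

theorem ConvexOn.sub_le_mul_sub (hf : ConvexOn ℝ s f) (ha : a ∈ s) (hav : a + v ∈ s) {t : ℝ}
    (ht₀ : 0 ≤ t) (ht₁ : t ≤ 1) : f (a + t • v) - f a ≤ t * (f (a + v) - f a) := by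
  have hseg := hf.2 ha hav (sub_nonneg.2 ht₁) ht₀ (sub_add_cancel 1 t)
  rw [show (1 - t) • a + t • (a + v) = a + t • v by module, smul_eq_mul, smul_eq_mul] at hseg
  linarith

theorem ConvexOn.sum_sub_le_sub (hf : ConvexOn ℝ s f) (ha : a ∈ s) (hav : a + v ∈ s)
    {I : Finset ι} {w : ι → ℝ} (hw₀ : ∀ i ∈ I, 0 ≤ w i) (hw₁ : ∑ i ∈ I, w i = 1) :
    ∑ i ∈ I, (f (a + w i • v) - f a) ≤ f (a + v) - f a :=
  calc ∑ i ∈ I, (f (a + w i • v) - f a)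
      ≤ ∑ i ∈ I, w i * (f (a + v) - f a) := sum_le_sum fun i hi =>
        hf.sub_le_mul_sub ha hav (hw₀ i hi) (hw₁ ▸ single_le_sum hw₀ hi)
    _ = f (a + v) - f a := by rw [← sum_mul, hw₁, one_mul]

end Increments

theorem ConvexOn.sum_sub_le_sub_of_conformal {ι : Type*} {s : Set ℝ} {f : ℝ → ℝ}
    (hf : ConvexOn ℝ s f) {a D : ℝ} (ha : a ∈ s) (haD : a + D ∈ s) {I : Finset ι}
    {Dt : ι → ℝ} (hsum : D = ∑ i ∈ I, Dt i)
    (hconf : ∀ i ∈ I, (D = 0 → Dt i = 0) ∧ 0 ≤ Dt i * D) :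
    ∑ i ∈ I, (f (a + Dt i) - f a) ≤ f (a + D) - f a := by
  rcases eq_or_ne D 0 with hD | hD
  · rw [sum_eq_zero fun i hi => by rw [(hconf i hi).1 hD, add_zero, sub_self], hD, add_zero,
      sub_self]
  have hDt : ∀ i, Dt i = (Dt i / D) • D := fun i => (div_mul_cancel₀ _ hD).symm
  have hw₀ : ∀ i ∈ I, 0 ≤ Dt i / D := fun i hi => by
    simpa only [mul_div_mul_right _ _ hD] using div_nonneg (hconf i hi).2 (mul_self_nonneg D)
  have hw₁ : ∑ i ∈ I, Dt i / D = 1 := by rw [← sum_div, ← hsum, div_self hD]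
  simpa only [← hDt] using hf.sum_sub_le_sub ha haD hw₀ hw₁

theorem stmt_9 (n : ℕ) (h : Fin n → ℝ → ℝ)
    (hconv : ∀ j, ConvexOn ℝ Set.univ (h j))
    (x d : Fin n → ℝ) (s : ℕ) (dt : Fin s → Fin n → ℝ)
    (hsum : d = ∑ t, dt t)
    (hconf : ∀ t j, (d j = 0 → dt t j = 0) ∧ 0 ≤ dt t j * d j) :
    (∑ j, h j (x j + d j)) - ∑ j, h j (x j) ≥
      ∑ t, ((∑ j, h j (x j + dt t j)) - ∑ j, h j (x j)) := by
  have hcoord : ∀ j, ∑ t, (h j (x j + dt t j) - h j (x j)) ≤ h j (x j + d j) - h j (x j) :=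
    fun j => (hconv j).sum_sub_le_sub_of_conformal trivial trivial
      (by rw [hsum, Finset.sum_apply]) fun t _ => hconf t j
  calc ∑ t, ((∑ j, h j (x j + dt t j)) - ∑ j, h j (x j))
      = ∑ j, ∑ t, (h j (x j + dt t j) - h j (x j)) := by
        simp only [← sum_sub_distrib]
        exact sum_comm
    _ ≤ ∑ j, (h j (x j + d j) - h j (x j)) := sum_le_sum fun j _ => hcoord j
    _ = (∑ j, h j (x j + d j)) - ∑ j, h j (x j) := sum_sub_distrib _ _
end

section
/- Let a ∈ ℝⁿ with n ≥ 2 and let d ∈ ℝⁿ satisfy ⟨a, d⟩ = 0. Then d can be written as d = Σ_t dᵗ where each dᵗ satisfies ⟨a, dᵗ⟩ = 0, each dᵗ has at most 2 nonzero coordinates, supp(dᵗ) ⊆ supp(d), and dᵗ_j · d_j ≥ 0 for all coordinates j. -/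
/-!
Put `w j = a j * d j`, so that `∑ j, w j = 0`: the positive mass `S` of `w` equals its negative
mass. It suffices to write the constant vector `1` as a sum of nonnegative weight vectors `c`,
each supported on at most two coordinates and with `∑ j, c j * w j = 0`; the vectors `c * d` then
decompose `d` conformally. Such weights come from the product coupling of the positive and the
negative part of `w`: each pair `(p, q)` with `w p > 0 > w q` carries weight `-w q / S` at `p` and
`w p / S` at `q`, and each `j` with `w j = 0` carries weight `1` on its own.
-/

open Finset Function

variable {ι : Type*} [Fintype ι]

noncomputable def posMass (w : ι → ℝ) : ℝ := ∑ j with 0 < w j, w j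

lemma posMass_nonneg (w : ι → ℝ) : 0 ≤ posMass w :=
  sum_nonneg fun _ hj => (mem_filter.1 hj).2.le

lemma sum_filter_neg_neg_eq_posMass {w : ι → ℝ} (hw : ∑ j, w j = 0) :
    ∑ j with w j < 0, -w j = posMass w := by
  have hsplit : ∀ j, (if w j < 0 then -w j else 0) - (if 0 < w j then w j else 0) = -w j := by
    intro j; split_ifs <;> linarith
  rw [← sub_eq_zero, posMass, sum_filter, sum_filter, ← sum_sub_distrib,
    sum_congr rfl fun j _ => hsplit j, sum_neg_distrib, hw, neg_zero]

lemma posMass_pos {w : ι → ℝ} (hw : ∑ j, w j = 0) {j : ι} (hj : w j ≠ 0) :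
    0 < posMass w := by
  rcases hj.lt_or_gt with hneg | hpos
  · rw [← sum_filter_neg_neg_eq_posMass hw]
    exact sum_pos' (fun i hi => by linarith [(mem_filter.1 hi).2])
      ⟨j, mem_filter.2 ⟨mem_univ j, hneg⟩, by linarith⟩
  · exact sum_pos' (fun i hi => (mem_filter.1 hi).2.le)
      ⟨j, mem_filter.2 ⟨mem_univ j, hpos⟩, hpos⟩

variable [DecidableEq ι]

noncomputable def pairWeight (w : ι → ℝ) (p q : ι) : ι → ℝ :=
  if 0 < w p ∧ w q < 0 then Pi.single p (-w q / posMass w) + Pi.single q (w p / posMass w)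
  else 0

lemma pairWeight_nonneg (w : ι → ℝ) (p q : ι) : 0 ≤ pairWeight w p q := by
  unfold pairWeight
  split_ifs with h
  · exact add_nonneg (Pi.single_nonneg.2 (div_nonneg (by linarith) (posMass_nonneg w)))
      (Pi.single_nonneg.2 (div_nonneg h.1.le (posMass_nonneg w)))
  · exact le_rfl

lemma support_pairWeight_subset (w : ι → ℝ) (p q : ι) :
    support (pairWeight w p q) ⊆ {p, q} := by
  unfold pairWeight
  split_ifs
  · refine (support_add _ _).trans (Set.union_subset ?_ ?_)
    · exact Pi.support_single_subset.trans (by simp)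
    · exact Pi.support_single_subset.trans (by simp)
  · simp

lemma sum_pairWeight_mul (w : ι → ℝ) (p q : ι) : ∑ j, pairWeight w p q j * w j = 0 := by
  unfold pairWeight
  split_ifs
  · simp only [Pi.add_apply, Pi.single_apply, add_mul, ite_mul, zero_mul, sum_add_distrib,
      sum_ite_eq', mem_univ, ↓reduceIte]
    ring
  · simp

lemma pairWeight_apply (w : ι → ℝ) (p q j : ι) :
    pairWeight w p q j = (if j = p ∧ 0 < w p ∧ w q < 0 then -w q / posMass w else 0) +
      (if j = q ∧ 0 < w p ∧ w q < 0 then w p / posMass w else 0) := by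
  unfold pairWeight
  split_ifs <;> simp_all

lemma sum_pairWeight_apply {w : ι → ℝ} (hw : ∑ j, w j = 0) (j : ι) :
    ∑ pq : ι × ι, pairWeight w pq.1 pq.2 j = if w j = 0 then 0 else 1 := by
  simp only [Fintype.sum_prod_type, pairWeight_apply, sum_add_distrib, ite_and]
  rw [sum_comm (f := fun p q => if j = q then _ else _)]
  simp only [sum_ite_irrel, sum_const_zero, sum_ite_eq, mem_univ, ↓reduceIte]
  rcases lt_trichotomy (w j) 0 with hneg | hzero | hpos
  · have hS := posMass_pos hw hneg.ne
    simp only [hneg, hneg.not_gt, hneg.ne, if_true, if_false, zero_add]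
    rw [← sum_filter, ← sum_div]
    exact div_self hS.ne'
  · simp [hzero]
  · have hS := posMass_pos hw hpos.ne'
    simp only [hpos, hpos.not_gt, hpos.ne', if_true, if_false, ite_self, sum_const_zero, add_zero]
    rw [← sum_filter, ← sum_div, sum_filter_neg_neg_eq_posMass hw, div_self hS.ne']

noncomputable def zeroWeight (w : ι → ℝ) (i : ι) : ι → ℝ :=
  Pi.single i (if w i = 0 then 1 else 0)

lemma sum_zeroWeight_mul (w : ι → ℝ) (i : ι) : ∑ j, zeroWeight w i j * w j = 0 := by
  simp [zeroWeight, Pi.single_apply]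

lemma sum_zeroWeight_apply (w : ι → ℝ) (j : ι) :
    ∑ i, zeroWeight w i j = if w j = 0 then 1 else 0 := by
  simp [zeroWeight, sum_pi_single]

theorem exists_pairSupported_partitionOfUnity {w : ι → ℝ} (hw : ∑ j, w j = 0) :
    ∃ (s : ℕ) (c : Fin s → ι → ℝ), ∑ t, c t = 1 ∧
      ∀ t, 0 ≤ c t ∧ (support (c t)).ncard ≤ 2 ∧ ∑ j, c t j * w j = 0 := by
  let c : (ι × ι) ⊕ ι → ι → ℝ :=
    Sum.elim (fun pq => pairWeight w pq.1 pq.2) (zeroWeight w)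
  have hc : ∀ t, 0 ≤ c t ∧ (support (c t)).ncard ≤ 2 ∧ ∑ j, c t j * w j = 0 := by
    rintro (⟨p, q⟩ | i)
    · exact ⟨pairWeight_nonneg w p q,
        (Set.ncard_le_ncard (support_pairWeight_subset w p q)).trans
          ((Set.ncard_insert_le p {q}).trans (by simp)),
        sum_pairWeight_mul w p q⟩
    · exact ⟨Pi.single_nonneg.2 (by split_ifs <;> norm_num),
        (Set.ncard_le_ncard Pi.support_single_subset).trans (by simp),
        sum_zeroWeight_mul w i⟩
  refine ⟨_, fun t => c ((Fintype.equivFin _).symm t), ?_, fun t => hc _⟩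
  rw [Equiv.sum_comp (Fintype.equivFin _).symm c]
  ext j
  simp only [Fintype.sum_sum_type, Finset.sum_apply, c, Sum.elim_inl, Sum.elim_inr,
    sum_pairWeight_apply hw, sum_zeroWeight_apply, Pi.one_apply]
  split_ifs <;> norm_num

theorem exists_conformal_pairSupported_decomposition (a d : ι → ℝ)
    (hd : ∑ j, a j * d j = 0) :
    ∃ (s : ℕ) (dt : Fin s → ι → ℝ),
      d = ∑ t, dt t ∧
      ∀ t, (∑ j, a j * dt t j = 0) ∧
        (support (dt t)).ncard ≤ 2 ∧
        (∀ j, d j = 0 → dt t j = 0) ∧ (∀ j, 0 ≤ dt t j * d j) := by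
  obtain ⟨s, c, hc1, hc⟩ := exists_pairSupported_partitionOfUnity hd
  refine ⟨s, fun t => c t * d, by rw [← sum_mul, hc1, one_mul], fun t => ?_⟩
  obtain ⟨hnonneg, hcard, horth⟩ := hc t
  refine ⟨?_, (Set.ncard_le_ncard (support_mul_subset_left _ _)).trans hcard,
    fun j hj => by simp [hj], fun j => ?_⟩
  · simpa only [Pi.mul_apply, mul_left_comm (a _), mul_comm (a _)] using horth
  · simpa only [Pi.mul_apply, mul_assoc] using mul_nonneg (hnonneg j) (mul_self_nonneg (d j))

theorem stmt_11_general (n : ℕ) (a d : Fin n → ℝ)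
    (hd : ∑ j, a j * d j = 0) :
    ∃ (s : ℕ) (dt : Fin s → Fin n → ℝ),
      d = ∑ t, dt t ∧
      ∀ t, (∑ j, a j * dt t j = 0) ∧
        (Function.support (dt t)).ncard ≤ 2 ∧
        (∀ j, d j = 0 → dt t j = 0) ∧ (∀ j, 0 ≤ dt t j * d j) :=
  exists_conformal_pairSupported_decomposition a d hd

theorem stmt_11 (n : ℕ) (hn : 2 ≤ n) (a d : Fin n → ℝ)
    (hd : ∑ j, a j * d j = 0) :
    ∃ (s : ℕ) (dt : Fin s → Fin n → ℝ),
      d = ∑ t, dt t ∧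
      ∀ t, (∑ j, a j * dt t j = 0) ∧
        (Function.support (dt t)).ncard ≤ 2 ∧
        (∀ j, d j = 0 → dt t j = 0) ∧ (∀ j, 0 ≤ dt t j * d j) :=
  stmt_11_general n a d hd
end

section
/- Let A ∈ ℝ^{m×n} and d ∈ Null(A) be an elementary vector of Null(A), i.e. there is no nonzero d' ∈ Null(A) conformal to d with supp(d') ≠ supp(d). Then |supp(d)| ≤ rank(A) + 1. -/
/-!
If `|supp d| ≥ rank A + 2`, the vectors of `Null(A)` supported in `supp d` form a space of
dimension at least `2`, so it contains some `u` independent of `d`. Taking for `c` the ratio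
`d_j / u_j` of least absolute value, `d - c u` is a nonzero vector of `Null(A)` conformal to `d`
that vanishes at `j ∈ supp d`, so `d` is not elementary.
-/

open Module LinearMap

section Supported

variable (K : Type*) {ι : Type*} [Field K]

def supportedSubmodule (S : Set ι) : Submodule K (ι → K) :=
  ⨅ i ∈ Sᶜ, ker (proj i : (ι → K) →ₗ[K] K)

variable {K}

theorem mem_supportedSubmodule {S : Set ι} {x : ι → K} :
    x ∈ supportedSubmodule K S ↔ ∀ i ∉ S, x i = 0 := by
  simp [supportedSubmodule]

theorem finrank_supportedSubmodule [Fintype ι] (S : Set ι) :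
    finrank K (supportedSubmodule K S) = S.ncard := by
  classical
  rw [supportedSubmodule, (iInfKerProjEquiv K (fun _ : ι ↦ K) disjoint_compl_right
    (by simp)).finrank_eq, finrank_fintype_fun_eq_card, ← Nat.card_eq_fintype_card,
    Nat.card_coe_set_eq]

theorem ncard_le_finrank_range_add_finrank_ker_inf_supportedSubmodule [Fintype ι] {M : Type*}
    [AddCommGroup M] [Module K M] (f : (ι → K) →ₗ[K] M) (S : Set ι) :
    S.ncard ≤ finrank K (range f) + finrank K ↥(ker f ⊓ supportedSubmodule K S) := by
  have hsup := Submodule.finrank_sup_add_finrank_inf_eq (ker f) (supportedSubmodule K S)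
  have hle := Submodule.finrank_le (ker f ⊔ supportedSubmodule K S)
  have hnullity := finrank_range_add_finrank_ker f
  rw [finrank_supportedSubmodule] at hsup
  omega

end Supported

theorem exists_conformal_sub_smul {ι K : Type*} [Fintype ι] [Field K] [LinearOrder K]
    [IsStrictOrderedRing K] {d u : ι → K} (hu : u ≠ 0) (hsupp : ∀ j, d j = 0 → u j = 0) :
    ∃ c : K, ∃ j, d j ≠ 0 ∧ d j = c * u j ∧ ∀ i, 0 ≤ (d i - c * u i) * d i := by
  classical
  obtain ⟨j₁, hj₁⟩ := Function.ne_iff.mp hu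
  simp only [Pi.zero_apply] at hj₁
  obtain ⟨j, hj, hmin⟩ := Finset.exists_min_image {i | u i ≠ 0} (fun i ↦ |d i / u i|)
    ⟨j₁, by simpa using hj₁⟩
  have huj : u j ≠ 0 := by simpa using hj
  refine ⟨d j / u j, j, fun h ↦ huj (hsupp j h), by field_simp, fun i ↦ ?_⟩
  by_cases hui : u i = 0
  · simpa [hui] using mul_self_nonneg (d i)
  -- `j` minimises `|d i / u i|`, so `c = d j / u j` never overshoots any coordinate of `d`.
  have hbound : |d j / u j * u i| ≤ |d i| := by
    have := hmin i (by simpa using hui)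
    rwa [abs_mul, ← le_div_iff₀ (abs_pos.mpr hui), ← abs_div]
  calc (0 : K) ≤ |d i| * |d i| - |d j / u j * u i| * |d i| := by
        rw [← sub_mul]; exact mul_nonneg (sub_nonneg.mpr hbound) (abs_nonneg _)
    _ = d i * d i - |d j / u j * u i * d i| := by rw [abs_mul_abs_self, abs_mul (d j / u j * u i)]
    _ ≤ (d i - d j / u j * u i) * d i := by
        rw [sub_mul]; exact sub_le_sub_left (le_abs_self _) _

theorem stmt_12 (m n : ℕ) (A : Matrix (Fin m) (Fin n) ℝ) (d : Fin n → ℝ)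
    (hd : A.mulVec d = 0)
    (helem : ∀ d' : Fin n → ℝ, A.mulVec d' = 0 → d' ≠ 0 →
      (∀ j, d j = 0 → d' j = 0) → (∀ j, 0 ≤ d' j * d j) →
      Function.support d' = Function.support d) :
    (Function.support d).ncard ≤ A.rank + 1 := by
  by_contra! hlt
  set W := ker A.mulVecLin ⊓ supportedSubmodule ℝ (Function.support d)
  have hdW : d ∈ W := ⟨hd, mem_supportedSubmodule.mpr fun i hi ↦ Function.notMem_support.mp hi⟩
  have hW : 1 < finrank ℝ W := by
    have : _ ≤ _ + finrank ℝ W :=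
      ncard_le_finrank_range_add_finrank_ker_inf_supportedSubmodule A.mulVecLin _
    rw [Matrix.rank] at hlt
    omega
  have hd0 : (⟨d, hdW⟩ : W) ≠ 0 := by
    intro h
    have hd_zero : d = 0 := congrArg Subtype.val h
    simp [hd_zero] at hlt
  obtain ⟨⟨u, huA, hu_supp⟩, hind⟩ := exists_linearIndependent_pair_of_one_lt_finrank hW hd0
  have hAu : A.mulVec u = 0 := huA
  have hu_off : ∀ j, d j = 0 → u j = 0 := fun j hj ↦
    mem_supportedSubmodule.mp hu_supp j (Function.notMem_support.mpr hj)
  have hu0 : u ≠ 0 := fun h ↦ hind.ne_zero 1 (Subtype.ext h)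
  obtain ⟨c, j, hdj, hcj, hconf⟩ := exists_conformal_sub_smul hu0 hu_off
  have he0 : d - c • u ≠ 0 := fun h ↦ one_ne_zero
    (LinearIndependent.pair_iff.mp hind 1 (-c) (Subtype.ext (by simpa [sub_eq_add_neg] using h))).1
  have hsupp := helem (d - c • u) (by simp [Matrix.mulVec_sub, Matrix.mulVec_smul, hd, hAu])
    he0 (fun i hi ↦ by simp [hi, hu_off i hi]) (by simpa using hconf)
  have : j ∈ Function.support (d - c • u) := hsupp ▸ hdj
  simp [hcj] at this
end

section
/- Let (ξ_k)_{k≥0} be a nonincreasing sequence of nonnegative random variables with ξ_0 a positive constant, and suppose E[ξ_{k+1} | ξ_k] ≤ (1 − 1/c) ξ_k whenever ξ_k ≥ ε, where c > 1 and 0 < ε < ξ_0. Moreover ξ_{k+1} ≤ ξ_k almost surely. Then for any ρ ∈ (0,1) and any integer K ≥ c·log(ξ_0/(ε ρ)), we have Pr(ξ_K ≤ ε) ≥ 1 − ρ. -/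
/-!
The truncated mean `Y k = E[ξ_k 1{ξ_k ≥ ε}]` contracts by the factor `1 - 1/c` at each step, so
`Y K ≤ (1 - 1/c)^K ξ₀ ≤ e^{-K/c} ξ₀ ≤ ερ`; Markov's inequality for the truncated variable then
gives `P(ξ_K ≥ ε) ≤ Y K / ε ≤ ρ`.
-/

open MeasureTheory

theorem setIntegral_le_mul_setIntegral_of_condExp_le {Ω : Type*} {m m₀ : MeasurableSpace Ω}
    {μ : Measure[m₀] Ω} (hm : m ≤ m₀) [SigmaFinite (μ.trim hm)] {f g : Ω → ℝ}
    (hf : Integrable f μ) (hg : Integrable g μ) {s : Set Ω} (hs : MeasurableSet[m] s) {r : ℝ}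
    (h : ∀ᵐ ω ∂μ, ω ∈ s → μ[g|m] ω ≤ r * f ω) :
    ∫ ω in s, g ω ∂μ ≤ r * ∫ ω in s, f ω ∂μ := by
  rw [← setIntegral_condExp hm hg hs, ← integral_const_mul]
  exact setIntegral_mono_on_ae integrable_condExp.integrableOn (hf.const_mul r).integrableOn
    (hm s hs) h

section

variable {Ω : Type*} [MeasurableSpace Ω] {μ : Measure Ω} [IsFiniteMeasure μ]

/-- Since `g ≤ f`, the set `{ε ≤ g}` lies in `{ε ≤ f}`, which is `σ(f)`-measurable, so the
conditional bound can be integrated over it. -/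
theorem setIntegral_superlevel_le_of_condExp_le {f g : Ω → ℝ} (hf : Measurable f)
    (hfi : Integrable f μ) (hgi : Integrable g μ) (hg : 0 ≤ᵐ[μ] g) (hgf : g ≤ᵐ[μ] f) {ε r : ℝ}
    (h : ∀ᵐ ω ∂μ, ε ≤ f ω → μ[g|MeasurableSpace.comap f (borel ℝ)] ω ≤ r * f ω) :
    ∫ ω in {ω | ε ≤ g ω}, g ω ∂μ ≤ r * ∫ ω in {ω | ε ≤ f ω}, f ω ∂μ := calc
  _ ≤ ∫ ω in {ω | ε ≤ f ω}, g ω ∂μ :=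
    setIntegral_mono_set hgi.integrableOn (ae_restrict_of_ae hg)
      (hgf.mono fun _ hle hε => hε.trans hle)
  _ ≤ _ := setIntegral_le_mul_setIntegral_of_condExp_le hf.comap_le hfi hgi
      ⟨Set.Ici ε, measurableSet_Ici, rfl⟩ h

theorem mul_measureReal_le_setIntegral_superlevel {f : Ω → ℝ} (hf : Measurable f)
    (hfi : Integrable f μ) (ε : ℝ) :
    ε * μ.real {ω | ε ≤ f ω} ≤ ∫ ω in {ω | ε ≤ f ω}, f ω ∂μ :=
  setIntegral_ge_of_const_le_real (measurableSet_le measurable_const hf) (measure_ne_top _ _)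
    (fun _ h => h) hfi.integrableOn

end

theorem one_sub_inv_pow_mul_le {a b c : ℝ} (ha : 0 < a) (hb : 0 < b) (hc : 1 < c) {K : ℕ}
    (hK : c * Real.log (a / b) ≤ K) : (1 - 1 / c) ^ K * a ≤ b := by
  have hc0 : 0 < c := one_pos.trans hc
  have hpow : (1 - 1 / c) ^ K ≤ Real.exp (-(K / c)) := calc
    _ ≤ Real.exp (-(1 / c)) ^ K :=
      pow_le_pow_left₀ (sub_nonneg.2 ((div_le_one hc0).2 hc.le))
        (by linarith [Real.add_one_le_exp (-(1 / c))]) K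
    _ = _ := by rw [← Real.exp_nat_mul]; ring_nf
  have hexp : Real.exp (-(K / c)) ≤ b / a := by
    rw [← Real.exp_log (div_pos hb ha), Real.exp_le_exp, ← inv_div a b, Real.log_inv, neg_le_neg_iff,
      le_div_iff₀ hc0, mul_comm]
    exact hK
  calc (1 - 1 / c) ^ K * a ≤ b / a * a := by gcongr; exact hpow.trans hexp
    _ = b := div_mul_cancel₀ b ha.ne'

theorem stmt_16_general {Ω : Type*} [MeasurableSpace Ω] (μ : Measure Ω)
    [IsProbabilityMeasure μ]
    (ξ : ℕ → Ω → ℝ) (hmeas : ∀ k, Measurable (ξ k))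
    (hint : ∀ k, Integrable (ξ k) μ)
    (hnn : ∀ k ω, 0 ≤ ξ k ω)
    (ξ0 : ℝ) (hξ0 : ∀ ω, ξ 0 ω = ξ0)
    (ε : ℝ) (hε : 0 < ε) (hεξ0 : ε < ξ0)
    (c : ℝ) (hc : 1 < c)
    (hmono : ∀ k, ∀ᵐ ω ∂μ, ξ (k + 1) ω ≤ ξ k ω)
    (hcontract : ∀ k, ∀ᵐ ω ∂μ, ε ≤ ξ k ω →
      (μ[ξ (k + 1)|MeasurableSpace.comap (ξ k) (borel ℝ)]) ω ≤ (1 - 1 / c) * ξ k ω)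
    (ρ : ℝ) (hρ0 : 0 < ρ) :
    ∀ K : ℕ, c * Real.log (ξ0 / (ε * ρ)) ≤ K →
      ENNReal.ofReal (1 - ρ) ≤ μ {ω | ξ K ω ≤ ε} := by
  intro K hK
  set Y : ℕ → ℝ := fun k => ∫ ω in {ω | ε ≤ ξ k ω}, ξ k ω ∂μ
  have hY0 : Y 0 ≤ ξ0 := by
    simp only [Y, hξ0, setIntegral_const, smul_eq_mul]
    exact mul_le_of_le_one_left (hε.trans hεξ0).le measureReal_le_one
  have hr : 0 ≤ 1 - 1 / c := sub_nonneg.2 ((div_le_one (one_pos.trans hc)).2 hc.le)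
  have hYK : Y K ≤ (1 - 1 / c) ^ K * ξ0 := by
    refine (le_geom (u := Y) hr K fun k _ => ?_).trans
      (mul_le_mul_of_nonneg_left hY0 (pow_nonneg hr K))
    exact setIntegral_superlevel_le_of_condExp_le (hmeas k) (hint k) (hint (k + 1))
      (ae_of_all _ (hnn (k + 1))) (hmono k) (hcontract k)
  have htail : μ.real {ω | ε ≤ ξ K ω} ≤ ρ := by
    refine le_of_mul_le_mul_left ?_ hε
    exact (mul_measureReal_le_setIntegral_superlevel (hmeas K) (hint K) ε).trans
      (hYK.trans (one_sub_inv_pow_mul_le (hε.trans hεξ0) (mul_pos hε hρ0) hc hK))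
  rw [ENNReal.ofReal_le_iff_le_toReal (measure_ne_top _ _)]
  calc 1 - ρ ≤ 1 - μ.real {ω | ε ≤ ξ K ω} := by linarith
    _ = μ.real {ω | ε ≤ ξ K ω}ᶜ :=
      (probReal_compl_eq_one_sub (measurableSet_le measurable_const (hmeas K))).symm
    _ ≤ μ.real {ω | ξ K ω ≤ ε} := measureReal_mono fun _ (h : ¬ε ≤ _) => (lt_of_not_ge h).le

theorem stmt_16 {Ω : Type*} [MeasurableSpace Ω] (μ : Measure Ω)
    [IsProbabilityMeasure μ]
    (ξ : ℕ → Ω → ℝ) (hmeas : ∀ k, Measurable (ξ k))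
    (hint : ∀ k, Integrable (ξ k) μ)
    (hnn : ∀ k ω, 0 ≤ ξ k ω)
    (ξ0 : ℝ) (hξ0 : ∀ ω, ξ 0 ω = ξ0)
    (ε : ℝ) (hε : 0 < ε) (hεξ0 : ε < ξ0)
    (c : ℝ) (hc : 1 < c)
    (hmono : ∀ k, ∀ᵐ ω ∂μ, ξ (k + 1) ω ≤ ξ k ω)
    (hcontract : ∀ k, ∀ᵐ ω ∂μ, ε ≤ ξ k ω →
      (μ[ξ (k + 1)|MeasurableSpace.comap (ξ k) (borel ℝ)]) ω ≤ (1 - 1 / c) * ξ k ω)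
    (ρ : ℝ) (hρ0 : 0 < ρ) (hρ1 : ρ < 1) :
    ∀ K : ℕ, c * Real.log (ξ0 / (ε * ρ)) ≤ K →
      ENNReal.ofReal (1 - ρ) ≤ μ {ω | ξ K ω ≤ ε} :=
  stmt_16_general μ ξ hmeas hint hnn ξ0 hξ0 ε hε hεξ0 c hc hmono hcontract ρ hρ0
end

section
/- Let f be convex and differentiable with blockwise Lipschitz gradients with constants L_i, and define for a subset 𝒩 of blocks L_𝒩 = Σ_{i∈𝒩} L_i. Then for all x and all d supported on the blocks in 𝒩 (d_i = 0 for i ∉ 𝒩), f(x + d) ≤ f(x) + ⟨∇f(x), d⟩ + (L_𝒩/2)‖d‖². -/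
/-!
Along block `i` the gradient is `Lᵢ`-Lipschitz, so the one-dimensional descent lemma gives
`f (x + t • Uᵢ dᵢ) ≤ f x + t ⟪∇f x, Uᵢ dᵢ⟫ + Lᵢ / 2 · t² ‖dᵢ‖²` for every `t`. Writing `x + d` as
the convex combination `∑ (Lᵢ / L_𝒩) • (x + (L_𝒩 / Lᵢ) • Uᵢ dᵢ)` and applying Jensen's inequality,
the linear terms add up to `⟪∇f x, d⟫` and the quadratic ones to `L_𝒩 / 2 · ‖d‖²`.
-/

open scoped RealInnerProductSpace

open Finset Set

theorem map_one_le_of_deriv_sub_le {φ φ' : ℝ → ℝ} {C : ℝ}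
    (hφ : ∀ t, HasDerivAt φ (φ' t) t) (hC : ∀ t ∈ Icc (0 : ℝ) 1, φ' t - φ' 0 ≤ C * t) :
    φ 1 ≤ φ 0 + φ' 0 + C / 2 := by
  set ψ : ℝ → ℝ := fun t => φ t - t * φ' 0 - C / 2 * t ^ 2
  have hψ : ∀ t, HasDerivAt ψ (φ' t - φ' 0 - C * t) t := fun t => by
    refine (((hφ t).sub ((hasDerivAt_id' t).mul_const (φ' 0))).sub
      ((hasDerivAt_pow 2 t).const_mul (C / 2))).congr_deriv ?_
    norm_num
    ring
  have hanti : AntitoneOn ψ (Icc 0 1) :=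
    antitoneOn_of_hasDerivWithinAt_nonpos (convex_Icc 0 1)
      (fun t _ => (hψ t).continuousAt.continuousWithinAt) (fun t _ => (hψ t).hasDerivWithinAt)
      fun t ht => by linarith [hC t (Ioo_subset_Icc_self (by simpa using ht))]
  have := hanti (left_mem_Icc.2 zero_le_one) (right_mem_Icc.2 zero_le_one) zero_le_one
  simp only [ψ] at this
  linarith

theorem map_add_le_of_inner_gradient_sub_le {F : Type*} [NormedAddCommGroup F]
    [InnerProductSpace ℝ F] [CompleteSpace F] {f : F → ℝ} (hf : Differentiable ℝ f) (x v : F)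
    {C : ℝ}
    (hC : ∀ t ∈ Icc (0 : ℝ) 1, ⟪gradient f (x + t • v) - gradient f x, v⟫ ≤ C * t) :
    f (x + v) ≤ f x + ⟪gradient f x, v⟫ + C / 2 := by
  have hline : ∀ t : ℝ, HasDerivAt (fun t : ℝ => f (x + t • v)) ⟪gradient f (x + t • v), v⟫ t :=
    fun t => by
      have hγ : HasDerivAt (fun t : ℝ => x + t • v) v t := by
        simpa using ((hasDerivAt_id t).smul_const v).const_add x
      exact (hf _).hasGradientAt.hasFDerivAt.comp_hasDerivAt t hγ
  simpa only [one_smul, zero_smul, add_zero] using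
    map_one_le_of_deriv_sub_le hline fun t ht => by
      simpa only [zero_smul, add_zero, ← inner_sub_left] using hC t ht

theorem ConvexOn.map_add_sum_le_of_forall_map_add_smul_le {ι E : Type*} [AddCommGroup E]
    [Module ℝ E] {f : E → ℝ} (hf : ConvexOn ℝ univ f) {s : Finset ι} {L a q : ι → ℝ} {v : ι → E}
    (hL : ∀ i ∈ s, 0 < L i) (x : E)
    (hv : ∀ i ∈ s, ∀ t : ℝ, f (x + t • v i) ≤ f x + t * a i + L i / 2 * t ^ 2 * q i) :
    f (x + ∑ i ∈ s, v i) ≤ f x + ∑ i ∈ s, a i + (∑ i ∈ s, L i) / 2 * ∑ i ∈ s, q i := by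
  rcases s.eq_empty_or_nonempty with rfl | hs
  · simp
  set S := ∑ i ∈ s, L i
  have hS : 0 < S := sum_pos hL hs
  have hw₀ : ∀ i ∈ s, 0 ≤ L i / S := fun i hi => div_nonneg (hL i hi).le hS.le
  have hw₁ : ∑ i ∈ s, L i / S = 1 := by rw [← sum_div, div_self hS.ne']
  have hcomb : ∑ i ∈ s, (L i / S) • (x + (S / L i) • v i) = x + ∑ i ∈ s, v i := by
    simp only [smul_add, smul_smul, ← sum_smul, hw₁, one_smul, sum_add_distrib]
    congr 1
    refine sum_congr rfl fun i hi => ?_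
    rw [div_mul_div_cancel₀ hS.ne', div_self (hL i hi).ne', one_smul]
  calc f (x + ∑ i ∈ s, v i) = f (∑ i ∈ s, (L i / S) • (x + (S / L i) • v i)) := by rw [hcomb]
    _ ≤ ∑ i ∈ s, (L i / S) * f (x + (S / L i) • v i) :=
      hf.map_sum_le hw₀ hw₁ fun _ _ => mem_univ _
    _ ≤ ∑ i ∈ s, (L i / S) * (f x + S / L i * a i + L i / 2 * (S / L i) ^ 2 * q i) :=
      sum_le_sum fun i hi => mul_le_mul_of_nonneg_left (hv i hi _) (hw₀ i hi)
    _ = ∑ i ∈ s, (L i / S * f x + a i + S / 2 * q i) := sum_congr rfl fun i hi => by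
      have := (hL i hi).ne'
      field_simp
    _ = f x + ∑ i ∈ s, a i + S / 2 * ∑ i ∈ s, q i := by
      rw [sum_add_distrib, sum_add_distrib, ← sum_mul, hw₁, one_mul, mul_sum]

namespace PiLp

variable {ι : Type*} {β : ι → Type*}

theorem norm_sq_eq_sum_of_forall_notMem_eq_zero [Fintype ι] [∀ i, NormedAddCommGroup (β i)]
    {s : Finset ι} {d : PiLp 2 β} (hd : ∀ i ∉ s, d i = 0) : ‖d‖ ^ 2 = ∑ i ∈ s, ‖d i‖ ^ 2 := by
  rw [norm_sq_eq_of_L2]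
  exact (sum_subset (subset_univ s) fun i _ hi => by rw [hd i hi, norm_zero, sq, zero_mul]).symm

variable [DecidableEq ι]

theorem sum_single_of_forall_notMem_eq_zero [∀ i, AddCommGroup (β i)] {s : Finset ι}
    {d : PiLp 2 β} (hd : ∀ i ∉ s, d i = 0) : ∑ i ∈ s, single 2 i (d i) = d := by
  ext j
  rw [WithLp.ofLp_sum, Finset.sum_apply]
  by_cases hj : j ∈ s
  · rw [sum_eq_single j (fun i _ hij => single_eq_of_ne' 2 hij _) (absurd hj), single_eq_same]
  · rw [hd j hj, sum_eq_zero fun i hi => single_eq_of_ne' 2 (ne_of_mem_of_not_mem hi hj) _]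

theorem single_smul [∀ i, AddCommGroup (β i)] [∀ i, Module ℝ (β i)] (i : ι) (c : ℝ) (b : β i) :
    single 2 i (c • b) = c • single 2 i b := by
  rw [← toLp_single, Pi.single_smul, WithLp.toLp_smul, toLp_single]

theorem inner_single_right [Fintype ι] [∀ i, NormedAddCommGroup (β i)]
    [∀ i, InnerProductSpace ℝ (β i)] (x : PiLp 2 β) (i : ι) (b : β i) :
    ⟪x, single 2 i b⟫ = ⟪x i, b⟫ := by
  rw [inner_apply, Fintype.sum_eq_single i fun j hj => by
    rw [single_eq_of_ne 2 hj, inner_zero_right], single_eq_same]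

end PiLp

open PiLp

theorem map_add_smul_single_le {ι : Type*} [Fintype ι] [DecidableEq ι] {β : ι → Type*}
    [∀ i, NormedAddCommGroup (β i)] [∀ i, InnerProductSpace ℝ (β i)] [∀ i, CompleteSpace (β i)]
    {f : PiLp 2 β → ℝ} (hf : Differentiable ℝ f) {i : ι} {Lᵢ : ℝ}
    (hblock : ∀ x (h : β i), ‖gradient f (x + single 2 i h) i - gradient f x i‖ ≤ Lᵢ * ‖h‖)
    (x : PiLp 2 β) (h : β i) (t : ℝ) :
    f (x + t • single 2 i h) ≤
      f x + t * ⟪gradient f x, single 2 i h⟫ + Lᵢ / 2 * t ^ 2 * ‖h‖ ^ 2 := by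
  rw [← single_smul]
  refine (map_add_le_of_inner_gradient_sub_le hf x _ (C := Lᵢ * ‖t • h‖ ^ 2)
    fun s hs => ?_).trans_eq ?_
  · rw [inner_single_right, ← single_smul]
    calc ⟪(gradient f (x + single 2 i (s • t • h)) - gradient f x) i, t • h⟫
        ≤ ‖gradient f (x + single 2 i (s • t • h)) i - gradient f x i‖ * ‖t • h‖ :=
          real_inner_le_norm _ _
      _ ≤ Lᵢ * ‖s • t • h‖ * ‖t • h‖ := by gcongr; exact hblock x _
      _ = Lᵢ * ‖t • h‖ ^ 2 * s := by rw [norm_smul _ (t • h), Real.norm_of_nonneg hs.1]; ring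
  · rw [single_smul, real_inner_smul_right, norm_smul, Real.norm_eq_abs, mul_pow, sq_abs]
    ring

theorem stmt_18 (N : ℕ) (n : Fin N → ℕ) (L : Fin N → ℝ) (hL : ∀ i, 0 < L i)
    (f : PiLp 2 (fun i : Fin N => EuclideanSpace ℝ (Fin (n i))) → ℝ)
    (hconv : ConvexOn ℝ Set.univ f) (hdiff : Differentiable ℝ f)
    (hblock : ∀ (i : Fin N) (x : PiLp 2 (fun i : Fin N => EuclideanSpace ℝ (Fin (n i))))
      (h : EuclideanSpace ℝ (Fin (n i))),
      ‖(WithLp.equiv 2 _) (gradient f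
          (x + (WithLp.equiv 2 _).symm
            (Function.update (0 : ∀ j : Fin N, EuclideanSpace ℝ (Fin (n j))) i h))) i -
        (WithLp.equiv 2 _) (gradient f x) i‖ ≤ L i * ‖h‖)
    (𝒩 : Finset (Fin N)) :
    ∀ x d : PiLp 2 (fun i : Fin N => EuclideanSpace ℝ (Fin (n i))),
      (∀ i ∉ 𝒩, (WithLp.equiv 2 _) d i = 0) →
      f (x + d) ≤ f x + ⟪gradient f x, d⟫ + (∑ i ∈ 𝒩, L i) / 2 * ‖d‖ ^ 2 := by
  intro x d hd
  -- `hblock i` is the hypothesis of `map_add_smul_single_le` with `single 2 i` unfolded.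
  have key := hconv.map_add_sum_le_of_forall_map_add_smul_le (s := 𝒩)
    (v := fun i => single 2 i (d i)) (a := fun i => ⟪gradient f x, single 2 i (d i)⟫)
    (q := fun i => ‖d i‖ ^ 2) (fun i _ => hL i) x
    fun i _ => map_add_smul_single_le hdiff (hblock i) x (d i)
  rwa [← inner_sum, sum_single_of_forall_notMem_eq_zero hd,
    ← norm_sq_eq_sum_of_forall_notMem_eq_zero hd] at key
end
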